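/- Let d ≥ 1, 1 ≤ p, q ≤ ∞, and φ, h ∈ 𝒮(ℝ^d). For k, l, l' ∈ ℤ^d set φ_k(x) := φ(x−k), h_l(x) := h(x−l), and define T_{k,l,l'}f := h_l · 𝓕^{−1}(φ_k 𝓕(h_{l'} f)) for f ∈ 𝒮'(ℝ^d). Then for every L ∈ ℕ there is a constant C depending only on φ, h, L, d, p, q such that ‖T_{k,l,l'}f‖_{L^q(ℝ^d)} ≤ C ⟨l−l'⟩^{−L} ‖f‖_{L^p(ℝ^d)} for all f ∈ L^p and all k, l, l' ∈ ℤ^d. -/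

import Mathlib

open MeasureTheory Complex Filter
open scoped ENNReal NNReal Topology

noncomputable section

abbrev Rd (d : ℕ) := EuclideanSpace ℝ (Fin d)

namespace KG

variable {d : ℕ}

/-- An integer lattice point viewed as a vector in `ℝ^d`. -/
def zvec (k : Fin d → ℤ) : Rd d := WithLp.toLp 2 (fun i => (k i : ℝ))

/-- The `ℓ^∞` norm `|x|_∞` on `ℝ^d`. -/
def supNorm (x : Rd d) : ℝ := ⨆ i, |x i|

/-- Japanese bracket `⟨x⟩ = (1+|x|²)^{1/2}`. -/
def jb (x : Rd d) : ℝ := Real.sqrt (1 + ‖x‖ ^ 2)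

/-- Fourier transform `𝓕 f (ξ) = ∫ f(x) e^{-i x·ξ} dx`. -/
def FT (f : Rd d → ℂ) (ξ : Rd d) : ℂ :=
  ∫ x : Rd d, Complex.exp (-(Complex.I * ((inner ℝ x ξ : ℝ) : ℂ))) * f x

/-- Inverse Fourier transform. -/
def FTinv (f : Rd d → ℂ) (x : Rd d) : ℂ :=
  ((2 * Real.pi : ℂ))⁻¹ ^ d * ∫ ξ : Rd d, Complex.exp (Complex.I * ((inner ℝ ξ x : ℝ) : ℂ)) * f ξ

/-- Fourier multiplier operator with symbol `m`. -/
def mult (m : Rd d → ℂ) (f : Rd d → ℂ) : Rd d → ℂ :=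
  FTinv fun ξ => m ξ * FT f ξ

/-- `⟨∇⟩^σ`. -/
def jbPow (σ : ℝ) : (Rd d → ℂ) → Rd d → ℂ := mult fun ξ => ((jb ξ ^ σ : ℝ) : ℂ)

/-- Half Klein-Gordon propagator `e^{iεt⟨∇⟩}` (`ε = ±1`). -/
def halfWave (ε t : ℝ) : (Rd d → ℂ) → Rd d → ℂ :=
  mult fun ξ => Complex.exp (Complex.I * ((ε * t * jb ξ : ℝ) : ℂ))

/-- `cos(t⟨∇⟩)`. -/
def cosProp (t : ℝ) : (Rd d → ℂ) → Rd d → ℂ :=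
  mult fun ξ => ((Real.cos (t * jb ξ) : ℝ) : ℂ)

/-- `sin(t⟨∇⟩)/⟨∇⟩`. -/
def sinProp (t : ℝ) : (Rd d → ℂ) → Rd d → ℂ :=
  mult fun ξ => ((Real.sin (t * jb ξ) / jb ξ : ℝ) : ℂ)

/-- `⟨∇⟩ sin(t⟨∇⟩)`. -/
def sinDProp (t : ℝ) : (Rd d → ℂ) → Rd d → ℂ :=
  mult fun ξ => ((jb ξ * Real.sin (t * jb ξ) : ℝ) : ℂ)

/-- First component `π₁K(t)(u₀,u₁)` of the linear Klein-Gordon flow. -/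
def KGflow₁ (t : ℝ) (u₀ u₁ : Rd d → ℂ) : Rd d → ℂ :=
  fun x => cosProp t u₀ x + sinProp t u₁ x

/-- Second component `∂_t π₁K(t)(u₀,u₁)` of the linear Klein-Gordon flow. -/
def KGflow₂ (t : ℝ) (u₀ u₁ : Rd d → ℂ) : Rd d → ℂ :=
  fun x => -sinDProp t u₀ x + cosProp t u₁ x

/-- Sobolev `H^s` norm. -/
def HNorm (s : ℝ) (f : Rd d → ℂ) : ℝ≥0∞ := eLpNorm (jbPow s f) 2 volume

/-- `L^q` norm in time of an `ℝ≥0∞`-valued function on `I`. -/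
def timeLp (q : ℝ≥0∞) (I : Set ℝ) (g : ℝ → ℝ≥0∞) : ℝ≥0∞ :=
  if q = ∞ then ⨆ t ∈ I, g t
  else (∫⁻ t in I, g t ^ q.toReal) ^ (1 / q.toReal)

/-- Mixed norm `L^q_t(I; L^r_x)`. -/
def STNorm (q r : ℝ≥0∞) (I : Set ℝ) (u : ℝ → Rd d → ℂ) : ℝ≥0∞ :=
  timeLp q I fun t => eLpNorm (u t) r volume

/-- Strichartz time exponent `(d+2)/(d-2)`. -/
def Sq (d : ℕ) : ℝ≥0∞ := ENNReal.ofReal (((d : ℝ) + 2) / ((d : ℝ) - 2))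

/-- Strichartz space exponent `2(d+2)/(d-2)`. -/
def Sr (d : ℕ) : ℝ≥0∞ := ENNReal.ofReal (2 * ((d : ℝ) + 2) / ((d : ℝ) - 2))

/-- The Strichartz norm `S(I) = L^{(d+2)/(d-2)}_t(I; L^{2(d+2)/(d-2)}_x)`. -/
def SNorm (d : ℕ) (I : Set ℝ) (u : ℝ → Rd d → ℂ) : ℝ≥0∞ := STNorm (Sq d) (Sr d) I u

/-- `u ∈ S_loc(I)`. -/
def SLoc (d : ℕ) (I : Set ℝ) (u : ℝ → Rd d → ℂ) : Prop :=
  ∀ a b : ℝ, Set.Icc a b ⊆ I → SNorm d (Set.Icc a b) u < ∞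

/-- Restriction (by characteristic function) of a space-time function to a region. -/
def chiRegion (U : Set (ℝ × Rd d)) (u : ℝ → Rd d → ℂ) : ℝ → Rd d → ℂ :=
  fun t x => Set.indicator U (fun p => u p.1 p.2) (t, x)

/-- `‖u‖_{S̃(U)} := ‖u χ_U‖_{S(ℝ)}`. -/
def SNormTilde (d : ℕ) (U : Set (ℝ × Rd d)) (u : ℝ → Rd d → ℂ) : ℝ≥0∞ :=
  SNorm d Set.univ (chiRegion U u)

/-- Mixed norm over a space-time region. -/
def STNormRegion (q r : ℝ≥0∞) (U : Set (ℝ × Rd d)) (u : ℝ → Rd d → ℂ) : ℝ≥0∞ :=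
  STNorm q r Set.univ (chiRegion U u)

/-- The Sobolev-critical nonlinearity `u^{(d+2)/(d-2)} = |u|^{4/(d-2)} u`. -/
def NLc (d : ℕ) (z : ℂ) : ℂ := ((‖z‖ ^ ((4 : ℝ) / ((d : ℝ) - 2)) : ℝ) : ℂ) * z

/-- Klein-Gordon energy. -/
def Energy (d : ℕ) (u₀ u₁ : Rd d → ℂ) : ℝ≥0∞ :=
  ∫⁻ x, ENNReal.ofReal ((1/2) * ‖u₁ x‖ ^ 2 + (1/2) * ‖fderiv ℝ u₀ x‖ ^ 2
    + (1/2) * ‖u₀ x‖ ^ 2 + (((d : ℝ) - 2) / (2 * (d : ℝ))) * ‖u₀ x‖ ^ ((2 * (d : ℝ)) / ((d : ℝ) - 2)))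

/-- Assumptions on the bump function `φ` generating the uniform decomposition. -/
structure IsUnifBump (d : ℕ) (φ : Rd d → ℝ) : Prop where
  smooth : ContDiff ℝ (⊤ : ℕ∞) φ
  nonneg : ∀ x, 0 ≤ φ x
  le_one : ∀ x, φ x ≤ 1
  eq_one : ∀ x : Rd d, (∀ i, |x i| ≤ 1/4) → φ x = 1
  eq_zero : ∀ x : Rd d, ¬(∀ i, |x i| ≤ 1) → φ x = 0
  partition : ∀ x : Rd d, ∑' k : Fin d → ℤ, φ (x - zvec k) = 1

/-- The frequency-uniform decomposition operator `P_k`. -/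
def Pk (φ : Rd d → ℝ) (k : Fin d → ℤ) : (Rd d → ℂ) → Rd d → ℂ :=
  mult fun ξ => ((φ (ξ - zvec k) : ℝ) : ℂ)

/-- The enlarged operator `P̃_k = ∑_{|k'-k|_∞ ≤ 1} P_{k'}`. -/
def Ptilde (φ : Rd d → ℝ) (k : Fin d → ℤ) (f : Rd d → ℂ) : Rd d → ℂ :=
  fun x => ∑' k' : Fin d → ℤ,
    Set.indicator {k' : Fin d → ℤ | ∀ i, |k' i - k i| ≤ 1} (fun k' => Pk φ k' f x) k'

/-- Assumptions on the radial bump `χ₀` generating the dyadic decomposition. -/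
structure IsRadialBump (d : ℕ) (χ : Rd d → ℝ) : Prop where
  smooth : ContDiff ℝ (⊤ : ℕ∞) χ
  nonneg : ∀ x, 0 ≤ χ x
  le_one : ∀ x, χ x ≤ 1
  eq_one : ∀ x, ‖x‖ ≤ 1 → χ x = 1
  eq_zero : ∀ x, 2 < ‖x‖ → χ x = 0

/-- Littlewood-Paley symbol `ψ_N` for `N = 2^n`. -/
def lpSymb (χ : Rd d → ℝ) (n : ℕ) (ξ : Rd d) : ℝ :=
  if n = 0 then χ ξ else χ ((((2:ℝ)^n)⁻¹) • ξ) - χ ((2 * ((2:ℝ)^n)⁻¹) • ξ)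

/-- Littlewood-Paley projection `P_N`, `N = 2^n`. -/
def PN (χ : Rd d → ℝ) (n : ℕ) : (Rd d → ℂ) → Rd d → ℂ :=
  mult fun ξ => ((lpSymb χ n ξ : ℝ) : ℂ)

/-- Translated bump `φ_l(x) = φ(x - l)`. -/
def translate (φ : Rd d → ℝ) (l : Fin d → ℤ) (x : Rd d) : ℝ := φ (x - zvec l)

/-- The randomized data `f^ω = ∑_{k,l} X_k(ω₁) P_k(Y_l(ω₂) φ_l f)`. -/
def randData (φ : Rd d → ℝ) {Ω₁ Ω₂ : Type*} (X : (Fin d → ℤ) → Ω₁ → ℝ)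
    (Y : (Fin d → ℤ) → Ω₂ → ℝ) (f : Rd d → ℂ) (ω₁ : Ω₁) (ω₂ : Ω₂) : Rd d → ℂ :=
  fun x => ∑' k : Fin d → ℤ, ∑' l : Fin d → ℤ,
    (X k ω₁ : ℂ) * Pk φ k (fun y => (Y l ω₂ : ℂ) * (translate φ l y : ℂ) * f y) x

/-- Uniformly sub-Gaussian family of random variables. -/
def UnifSubGaussian {Ω : Type*} [MeasurableSpace Ω] (μ : Measure Ω)
    {ι : Type*} (X : ι → Ω → ℝ) : Prop :=
  ∃ C : ℝ, 0 < C ∧ ∀ i, ∀ p : ℝ, 1 ≤ p →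
    eLpNorm (X i) (ENNReal.ofReal p) μ ≤ ENNReal.ofReal (C * Real.sqrt p)

/-- Independent, mean-zero, uniformly sub-Gaussian family. -/
def RandAssump {Ω : Type*} [MeasurableSpace Ω] (μ : Measure Ω)
    {ι : Type*} (X : ι → Ω → ℝ) : Prop :=
  (∀ i, Measurable (X i)) ∧ ProbabilityTheory.iIndepFun X μ ∧
    (∀ i, ∫ ω, X i ω ∂μ = 0) ∧ UnifSubGaussian μ X

/-- `(w₁, w₂) ∈ C(I, H¹ × L²)`. -/
def ContH1L2 (I : Set ℝ) (w₁ w₂ : ℝ → Rd d → ℂ) : Prop :=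
  (∀ t ∈ I, HNorm 1 (w₁ t) < ∞ ∧ eLpNorm (w₂ t) 2 volume < ∞) ∧
  ∀ t₀ ∈ I, Filter.Tendsto
    (fun t => HNorm 1 (fun x => w₁ t x - w₁ t₀ x)
      + eLpNorm (fun x => w₂ t x - w₂ t₀ x) 2 volume) (nhdsWithin t₀ I) (nhds 0)

/-- Scattering to the linear flow of `(a, b)` along the filter `l`. -/
def ScattersTo (l : Filter ℝ) (u v : ℝ → Rd d → ℂ) (a b : Rd d → ℂ) : Prop :=
  Filter.Tendsto (fun t => HNorm 1 (fun x => u t x - KGflow₁ t a b x)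
    + eLpNorm (fun x => v t x - KGflow₂ t a b x) 2 volume) l (nhds 0)

/-- The truncated cone `K^N_{t₀,x₀}`. -/
def coneK (N t₀ : ℝ) (x₀ : Rd d) : Set (ℝ × Rd d) :=
  {p | t₀ ≤ p.1 ∧ p.1 ≤ t₀ + N ∧ supNorm (p.2 - x₀) ≤ 2 * N - p.1 + t₀}

/-- The localized energy `Ẽ^N_{t₀,x₀}[u]` (with `v = u_t`). -/
def tildeE (d : ℕ) (N t₀ : ℝ) (x₀ : Rd d) (u v : ℝ → Rd d → ℂ) : ℝ≥0∞ :=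
  ⨆ t ∈ Set.Icc t₀ (t₀ + N), ∫⁻ x in {x : Rd d | supNorm (x - x₀) ≤ 10 * N - t + t₀},
    ENNReal.ofReal ((1/2) * ‖v t x‖^2 + (1/2) * ‖u t x‖^2 + (1/2) * ‖fderiv ℝ (u t) x‖^2
      + (((d:ℝ)-2)/(2*(d:ℝ))) * ‖u t x‖ ^ ((2*(d:ℝ))/((d:ℝ)-2)))

/-- The localized flux `F̃^{N,δ}_{t₀,x₀}[u]` with band width `N^a`. -/
def tildeF (d : ℕ) (a N t₀ : ℝ) (x₀ : Rd d) (u : ℝ → Rd d → ℂ) : ℝ≥0∞ :=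
  ⨆ t' ∈ Set.Icc t₀ (t₀ + N), ⨆ x' ∈ Metric.closedBall x₀ (3 * N),
    ∫⁻ t in Set.Icc t₀ (t₀ + N), ∫⁻ x in {x : Rd d | _root_.abs (‖x - x'‖ - |t - t'|) ≤ N ^ a},
      ENNReal.ofReal (‖u t x‖ ^ ((2*(d:ℝ))/((d:ℝ)-2)))

/-- `∫_{K^N_{t₀,x₀}} |F| |v| |u|^{4/(d-2)}`. -/
def coneInt (d : ℕ) (N t₀ : ℝ) (x₀ : Rd d) (F v u : ℝ → Rd d → ℂ) : ℝ≥0∞ :=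
  ∫⁻ t in Set.Icc t₀ (t₀ + N), ∫⁻ x in {x : Rd d | supNorm (x - x₀) ≤ 2 * N - t + t₀},
    ENNReal.ofReal (‖F t x‖ * ‖v t x‖ * ‖u t x‖ ^ ((4:ℝ)/((d:ℝ)-2)))

/-- `(u, v)` lies in the class `C(ℝ, H¹) ∩ C¹(ℝ, L²)`: `v` is the pointwise time
derivative of `u` and `(u, v) ∈ C(ℝ, H¹ × L²)`. -/
def C1Class (u v : ℝ → Rd d → ℂ) : Prop :=
  (∀ (x : Rd d) (t : ℝ), HasDerivAt (fun τ => u τ x) (v t x) t) ∧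
    ContH1L2 Set.univ u v

/-- Duhamel-sense solution `(u, u_t)` of the perturbed critical Klein-Gordon equation
`u_tt - Δu + u + (u+F)^{(d+2)/(d-2)} = 0` on `I`, with data `(v₀, v₁)` at `t = 0`. -/
def PerturbedSol (d : ℕ) (F : ℝ → Rd d → ℂ) (v₀ v₁ : Rd d → ℂ) (I : Set ℝ)
    (u v : ℝ → Rd d → ℂ) : Prop :=
  (∀ t ∈ I, ∀ x, u t x = KGflow₁ t v₀ v₁ x
      - ∫ s in (0:ℝ)..t, sinProp (t - s) (fun y => NLc d (u s y + F s y)) x) ∧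
  (∀ (x : Rd d), ∀ t ∈ I, HasDerivAt (fun τ => u τ x) (v t x) t) ∧
  ContH1L2 I u v ∧ SLoc d I u

/-- `eexp` : exponential on `ℝ≥0∞`. -/
def eexp (x : ℝ≥0∞) : ℝ≥0∞ := if x = ∞ then ∞ else ENNReal.ofReal (Real.exp x.toReal)

/-- `ℓ^p` norm of an `ℝ≥0∞`-valued sequence. -/
def seqLp (p : ℝ≥0∞) {ι : Type*} (a : ι → ℝ≥0∞) : ℝ≥0∞ :=
  if p = ∞ then ⨆ i, a i else (∑' i, a i ^ p.toReal) ^ (1 / p.toReal)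

end KG

namespace KG

variable {d : ℕ}

/-- Duhamel-sense solution of the perturbed equation, without the `S_loc` requirement:
`u(t) = π₁K(t)(v₀,v₁) − ∫₀ᵗ ⟨∇⟩⁻¹sin((t−s)⟨∇⟩)(u+F)^{(d+2)/(d−2)}(s)ds` on `I`,
`v = u_t`, and `(u,v) ∈ C(I, H¹×L²)`. -/
def PerturbedSolWeak (d : ℕ) (F : ℝ → Rd d → ℂ) (v₀ v₁ : Rd d → ℂ) (I : Set ℝ)
    (u v : ℝ → Rd d → ℂ) : Prop :=
  (∀ t ∈ I, ∀ x, u t x = KGflow₁ t v₀ v₁ x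
      - ∫ s in (0:ℝ)..t, sinProp (t - s) (fun y => NLc d (u s y + F s y)) x) ∧
  (∀ (x : Rd d), ∀ t ∈ I, HasDerivAt (fun τ => u τ x) (v t x) t) ∧
  ContH1L2 I u v

/-- Solution of the unperturbed critical Klein-Gordon equation with (possibly rough) data
`(f,g)`: Duhamel formula, `v = u_t`, and `(u,v) − K(t)(f,g) ∈ C(I, H¹×L²)`. -/
def FullSol (d : ℕ) (f g : Rd d → ℂ) (I : Set ℝ) (u v : ℝ → Rd d → ℂ) : Prop :=
  (∀ t ∈ I, ∀ x, u t x = KGflow₁ t f g x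
      - ∫ s in (0:ℝ)..t, sinProp (t - s) (fun y => NLc d (u s y)) x) ∧
  (∀ (x : Rd d), ∀ t ∈ I, HasDerivAt (fun τ => u τ x) (v t x) t) ∧
  ContH1L2 I (fun t x => u t x - KGflow₁ t f g x) (fun t x => v t x - KGflow₂ t f g x)

/-- The frequency annulus `K_N ⊂ ℤ^d`, `N = 2^n`. -/
def KNset (d : ℕ) (n : ℕ) : Set (Fin d → ℤ) :=
  if n = 0 then {k | supNorm (zvec k) ≤ 2}
  else {k | (2:ℝ)^n < supNorm (zvec k) ∧ supNorm (zvec k) < (2:ℝ)^(n+1)}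

/-- The randomized data with frequencies restricted to `K_N`, `N = 2^n`. -/
def randDataN (φ : Rd d → ℝ) (n : ℕ) {Ω₁ Ω₂ : Type*} (X : (Fin d → ℤ) → Ω₁ → ℝ)
    (Y : (Fin d → ℤ) → Ω₂ → ℝ) (f : Rd d → ℂ) (ω₁ : Ω₁) (ω₂ : Ω₂) : Rd d → ℂ :=
  fun x => ∑' k : Fin d → ℤ, Set.indicator (KNset d n)
    (fun k => ∑' l : Fin d → ℤ,
      (X k ω₁ : ℂ) * Pk φ k (fun y => (Y l ω₂ : ℂ) * (translate φ l y : ℂ) * f y) x) k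

/-- The half-wave piece `F^{ε,ω}_N(t) = (1/2) e^{iεt⟨∇⟩}(f^ω_N − ε i ⟨∇⟩^{-1} g^ω_N)`. -/
def halfWavePiece (φ : Rd d → ℝ) (n : ℕ) {Ω₁ Ω₂ : Type*} (X : (Fin d → ℤ) → Ω₁ → ℝ)
    (Y : (Fin d → ℤ) → Ω₂ → ℝ) (f g : Rd d → ℂ) (ω₁ : Ω₁) (ω₂ : Ω₂) (ε : ℝ) (t : ℝ) :
    Rd d → ℂ :=
  fun x => (1/2 : ℂ) * halfWave ε t
    (fun y => randDataN φ n X Y f ω₁ ω₂ y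
      - (ε : ℂ) * Complex.I * jbPow (-1) (randDataN φ n X Y g ω₁ ω₂) y) x

/-- The phase-space wave packet building block `f_{k,l}`. -/
def fkl (φ : Rd d → ℝ) (f g : Rd d → ℂ) (k l : Fin d → ℤ) : Rd d → ℂ :=
  fun x => (1/2 : ℂ) * (Pk φ k (fun y => (translate φ l y : ℂ) * f y) x
    - Complex.I * jbPow (-1) (Pk φ k fun y => (translate φ l y : ℂ) * g y) x)

/-- `f^{ω₂}_{k,t₀} = ∑_l e^{it₀⟨∇⟩} Y_l(ω₂) f_{k,l}`. -/
def fkt (φ : Rd d → ℝ) (f g : Rd d → ℂ) {Ω₂ : Type*} (Y : (Fin d → ℤ) → Ω₂ → ℝ)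
    (ω₂ : Ω₂) (k : Fin d → ℤ) (t₀ : ℝ) : Rd d → ℂ :=
  fun x => ∑' l : Fin d → ℤ, (Y l ω₂ : ℂ) * halfWave 1 t₀ (fkl φ f g k l) x

/-- The wave packet `W^{ω₂}_{k,l̃,t₀} = P̃_k(φ_{l̃} f^{ω₂}_{k,t₀})`. -/
def wavePacket (φ : Rd d → ℝ) (f g : Rd d → ℂ) {Ω₂ : Type*} (Y : (Fin d → ℤ) → Ω₂ → ℝ)
    (ω₂ : Ω₂) (k ltil : Fin d → ℤ) (t₀ : ℝ) : Rd d → ℂ :=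
  Ptilde φ k fun y => (translate φ ltil y : ℂ) * fkt φ f g Y ω₂ k t₀ y

/-- The space-time tube `T_{k,l̃}` of width `N^{2δ}` over `[t₀, t₀+N]`. -/
def tube (N δ t₀ : ℝ) (k ltil : Fin d → ℤ) : Set (ℝ × Rd d) :=
  {p | t₀ ≤ p.1 ∧ p.1 ≤ t₀ + N ∧
    ‖p.2 - (zvec ltil - p.1 • ((jb (zvec k))⁻¹ • zvec k))‖ ≤ N ^ (2 * δ)}

/-- The space-time cube `ρQ` where `Q` has center `c` and side length `a`. -/
def cubeQ (c : ℝ × Rd d) (a ρ : ℝ) : Set (ℝ × Rd d) :=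
  {p | |p.1 - c.1| ≤ ρ * a / 2 ∧ supNorm (p.2 - c.2) ≤ ρ * a / 2}

end KG


open FourierTransform Real
open scoped RealInnerProductSpace

namespace SHelp

variable {d : ℕ}

lemma aux_decay (ψ : SchwartzMap (EuclideanSpace ℝ (Fin d)) ℂ) (M : ℕ) :
    ∃ C : ℝ, 0 < C ∧ ∀ x, ‖ψ x‖ ≤ C * (1 + ‖x‖) ^ (-(M : ℝ)) := by
  refine ⟨2 ^ M * (Finset.Iic (M, 0)).sup (fun m => SchwartzMap.seminorm ℝ m.1 m.2) ψ + 1,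
    by positivity, fun x => ?_⟩
  have h := SchwartzMap.one_add_le_sup_seminorm_apply (𝕜 := ℝ) (m := (M, 0)) le_rfl le_rfl ψ x
  rw [norm_iteratedFDeriv_zero] at h
  have hx : (0:ℝ) < 1 + ‖x‖ := by positivity
  have hxM : (0:ℝ) < (1 + ‖x‖) ^ M := by positivity
  rw [Real.rpow_neg hx.le, Real.rpow_natCast]
  rw [mul_comm, ← div_eq_inv_mul, le_div_iff₀ hxM]
  nlinarith [norm_nonneg (ψ x)]

lemma aux_w_cont (m : ℕ) :
    Continuous (fun x : EuclideanSpace ℝ (Fin d) => (1 + ‖x‖) ^ (-(m : ℝ))) := by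
  apply Continuous.rpow_const (by continuity)
  intro x; left; positivity

lemma aux_w_mem (m : ℕ) (hm : d < m) (r : ℝ≥0∞) (hr : 1 ≤ r) :
    eLpNorm (fun x : EuclideanSpace ℝ (Fin d) => (1 + ‖x‖) ^ (-(m : ℝ))) r volume < ∞ := by
  rcases eq_or_ne r ∞ with hrtop | hrtop
  · subst hrtop
    rw [eLpNorm_exponent_top]
    refine lt_of_le_of_lt (eLpNormEssSup_le_of_ae_bound (C := 1) ?_) (by simp)
    refine Eventually.of_forall fun x => ?_
    rw [Real.norm_eq_abs, _root_.abs_of_nonneg (by positivity)]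
    apply Real.rpow_le_one_of_one_le_of_nonpos (by simp [norm_nonneg]) (by simp)
  · have hr0 : r ≠ 0 := by intro h; simp [h] at hr
    rw [eLpNorm_eq_lintegral_rpow_enorm_toReal hr0 hrtop]
    have hs1 : 1 ≤ r.toReal := by
      rw [← ENNReal.toReal_one]
      exact ENNReal.toReal_mono hrtop hr
    have hs0 : 0 < r.toReal := lt_of_lt_of_le one_pos hs1
    apply ENNReal.rpow_lt_top_of_nonneg (by positivity)
    apply ne_of_lt
    have key : ∀ x : EuclideanSpace ℝ (Fin d),
        ‖(1 + ‖x‖) ^ (-(m : ℝ))‖ₑ ^ r.toReal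
          = ENNReal.ofReal ((1 + ‖x‖) ^ (-(m * r.toReal))) := by
      intro x
      have hx : (0:ℝ) < 1 + ‖x‖ := by positivity
      rw [Real.enorm_eq_ofReal (by positivity),
        ENNReal.ofReal_rpow_of_nonneg (by positivity) hs0.le, ← Real.rpow_mul hx.le]
      ring_nf
    simp_rw [key]
    apply finite_integral_one_add_norm
    rw [finrank_euclideanSpace_fin]
    calc (d:ℝ) < m := by exact_mod_cast hm
      _ = m * 1 := by ring
      _ ≤ m * r.toReal := by apply mul_le_mul_of_nonneg_left hs1 (by positivity)

lemma aux_memLp_schwartz (ψ : SchwartzMap (EuclideanSpace ℝ (Fin d)) ℂ) (r : ℝ≥0∞)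
    (hr : 1 ≤ r) : MemLp ψ r volume := by
  obtain ⟨C, hC, hb⟩ := aux_decay ψ (d + 1)
  have hw := aux_w_mem (d := d) (d + 1) (by omega) r hr
  refine MemLp.of_le (g := fun x => C * (1 + ‖x‖) ^ (-((d+1 : ℕ) : ℝ)))
    ⟨(continuous_const.mul (aux_w_cont (d+1))).aestronglyMeasurable, ?_⟩
    ψ.continuous.aestronglyMeasurable ?_
  · have : (fun x : EuclideanSpace ℝ (Fin d) => C * (1 + ‖x‖) ^ (-((d+1 : ℕ) : ℝ)))
        = C • (fun x : EuclideanSpace ℝ (Fin d) => (1 + ‖x‖) ^ (-((d+1 : ℕ) : ℝ))) := by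
      funext x; simp
    rw [this, eLpNorm_const_smul]
    exact ENNReal.mul_lt_top (by simp) hw
  · refine Eventually.of_forall fun x => ?_
    refine (hb x).trans ?_
    rw [Real.norm_eq_abs, _root_.abs_of_nonneg (by positivity)]

lemma aux_memLp_translate (ψ : SchwartzMap (EuclideanSpace ℝ (Fin d)) ℂ) (r : ℝ≥0∞)
    (hr : 1 ≤ r) (b : EuclideanSpace ℝ (Fin d)) :
    MemLp (fun y => (ψ (y - b) : ℂ)) r volume :=
  (aux_memLp_schwartz ψ r hr).comp_measurePreserving (measurePreserving_sub_right volume b)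

lemma aux_eLpNorm_translate (w : EuclideanSpace ℝ (Fin d) → ℝ) (hw : Continuous w) (r : ℝ≥0∞)
    (b : EuclideanSpace ℝ (Fin d)) :
    eLpNorm (fun y => w (y - b)) r volume = eLpNorm w r volume :=
  eLpNorm_comp_measurePreserving hw.aestronglyMeasurable (measurePreserving_sub_right volume b)

lemma aux_phi (φ : SchwartzMap (EuclideanSpace ℝ (Fin d)) ℂ) (L : ℕ) :
    ∃ C : ℝ, 0 < C ∧ ∀ (c z : EuclideanSpace ℝ (Fin d)),
      ‖∫ ξ : EuclideanSpace ℝ (Fin d), Complex.exp (Complex.I * ((inner ℝ ξ z : ℝ) : ℂ)) * φ (ξ - c)‖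
        ≤ C * (1 + ‖z‖) ^ (-(L : ℝ)) := by
  obtain ⟨C, hC, hdec⟩ := aux_decay (SchwartzMap.fourierTransformCLM ℝ φ) L
  refine ⟨C * (2 * π) ^ L, by positivity, fun c z => ?_⟩
  have hA : (∫ ξ : EuclideanSpace ℝ (Fin d),
        Complex.exp (Complex.I * ((inner ℝ ξ z : ℝ) : ℂ)) * φ (ξ - c))
      = Complex.exp (Complex.I * ((inner ℝ c z : ℝ) : ℂ)) *
        ∫ η : EuclideanSpace ℝ (Fin d), Complex.exp (Complex.I * ((inner ℝ η z : ℝ) : ℂ)) * φ η := by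
    rw [← integral_add_right_eq_self
      (fun ξ => Complex.exp (Complex.I * ((inner ℝ ξ z : ℝ) : ℂ)) * φ (ξ - c)) c]
    rw [← integral_const_mul]
    congr 1; ext η
    rw [add_sub_cancel_right, ← mul_assoc, ← Complex.exp_add]
    congr 2
    rw [← mul_add, ← Complex.ofReal_add, inner_add_left, add_comm]
  have hB : (∫ η : EuclideanSpace ℝ (Fin d),
        Complex.exp (Complex.I * ((inner ℝ η z : ℝ) : ℂ)) * φ η)
      = 𝓕 ⇑φ (-(2 * π)⁻¹ • z) := by
    rw [Real.fourier_eq']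
    congr 1; ext v
    rw [smul_eq_mul]
    congr 2
    have hi : ⟪v, -(2 * π)⁻¹ • z⟫ = -(2 * π)⁻¹ * ⟪v, z⟫ := real_inner_smul_right v z _
    rw [hi]
    push_cast
    have h2π : (2 * π : ℝ) ≠ 0 := by positivity
    have : ((2:ℂ) * π) ≠ 0 := by exact_mod_cast h2π
    field_simp
  rw [hA, norm_mul]
  have hexp : ‖Complex.exp (Complex.I * ((inner ℝ c z : ℝ) : ℂ))‖ = 1 := by
    rw [Complex.norm_exp]
    simp [Complex.mul_re]
  rw [hexp, one_mul, hB]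
  have hw := hdec (-(2 * π)⁻¹ • z)
  refine hw.trans ?_
  have hπ : (0:ℝ) < 2 * π := by positivity
  have hnorm : ‖-(2 * π)⁻¹ • z‖ = (2 * π)⁻¹ * ‖z‖ := by
    rw [norm_smul, norm_neg, Real.norm_eq_abs,
      _root_.abs_of_nonneg (by positivity : (0:ℝ) ≤ (2*π)⁻¹)]
  have hkey : (1 + ‖z‖) ≤ (2 * π) * (1 + ‖-(2 * π)⁻¹ • z‖) := by
    rw [hnorm, mul_add, mul_one]
    have h1 : (2 * π) * ((2 * π)⁻¹ * ‖z‖) = ‖z‖ := by field_simp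
    rw [h1]
    have : (1:ℝ) ≤ 2 * π := by nlinarith [Real.pi_gt_three]
    linarith
  have h1 : (1 + ‖z‖) ^ (-(L:ℝ)) ≥ ((2 * π) * (1 + ‖-(2 * π)⁻¹ • z‖)) ^ (-(L:ℝ)) :=
    Real.rpow_le_rpow_of_nonpos (by positivity) hkey (by simp)
  have h2 : ((2 * π) * (1 + ‖-(2 * π)⁻¹ • z‖)) ^ (-(L:ℝ))
      = (2 * π) ^ (-(L:ℝ)) * (1 + ‖-(2 * π)⁻¹ • z‖) ^ (-(L:ℝ)) :=
    Real.mul_rpow (by positivity) (by positivity)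
  have h3 : (1 + ‖-(2 * π)⁻¹ • z‖) ^ (-(L:ℝ))
      ≤ (2 * π) ^ (L:ℝ) * (1 + ‖z‖) ^ (-(L:ℝ)) := by
    rw [h2] at h1
    have hp : (0:ℝ) < (2 * π) ^ (-(L:ℝ)) := Real.rpow_pos_of_pos hπ _
    calc (1 + ‖-(2 * π)⁻¹ • z‖) ^ (-(L:ℝ))
        = ((2 * π) ^ (-(L:ℝ)))⁻¹ *
            ((2 * π) ^ (-(L:ℝ)) * (1 + ‖-(2 * π)⁻¹ • z‖) ^ (-(L:ℝ))) := by
          field_simp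
      _ ≤ ((2 * π) ^ (-(L:ℝ)))⁻¹ * (1 + ‖z‖) ^ (-(L:ℝ)) := by
          apply mul_le_mul_of_nonneg_left h1 (by positivity)
      _ = (2 * π) ^ (L:ℝ) * (1 + ‖z‖) ^ (-(L:ℝ)) := by
          rw [Real.rpow_neg hπ.le, inv_inv]
  calc C * (1 + ‖-(2 * π)⁻¹ • z‖) ^ (-(L:ℝ))
      ≤ C * ((2 * π) ^ (L:ℝ) * (1 + ‖z‖) ^ (-(L:ℝ))) := by
        apply mul_le_mul_of_nonneg_left h3 hC.le
    _ = C * (2 * π) ^ L * (1 + ‖z‖) ^ (-(L:ℝ)) := by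
        rw [← Real.rpow_natCast (2*π) L]; ring

lemma aux_kernel (φ : SchwartzMap (EuclideanSpace ℝ (Fin d)) ℂ)
    (g : EuclideanSpace ℝ (Fin d) → ℂ) (hg : Integrable g volume)
    (c x : EuclideanSpace ℝ (Fin d)) :
    (∫ ξ : EuclideanSpace ℝ (Fin d), Complex.exp (Complex.I * ((inner ℝ ξ x : ℝ) : ℂ)) *
        (φ (ξ - c) * ∫ y : EuclideanSpace ℝ (Fin d),
          Complex.exp (-(Complex.I * ((inner ℝ y ξ : ℝ) : ℂ))) * g y))
      = ∫ y : EuclideanSpace ℝ (Fin d),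
          (∫ ξ : EuclideanSpace ℝ (Fin d),
            Complex.exp (Complex.I * ((inner ℝ ξ (x - y) : ℝ) : ℂ)) * φ (ξ - c)) * g y := by
  have hφc : Integrable (fun ξ : EuclideanSpace ℝ (Fin d) => (φ (ξ - c) : ℂ)) volume :=
    (φ.integrable).comp_sub_right c
  set F : EuclideanSpace ℝ (Fin d) → EuclideanSpace ℝ (Fin d) → ℂ := fun ξ y =>
    (Complex.exp (Complex.I * ((inner ℝ ξ x : ℝ) : ℂ)) * φ (ξ - c)) *
      (Complex.exp (-(Complex.I * ((inner ℝ y ξ : ℝ) : ℂ))) * g y) with hF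
  have hu : Continuous (fun p : EuclideanSpace ℝ (Fin d) × EuclideanSpace ℝ (Fin d) =>
      Complex.exp (Complex.I * ((inner ℝ p.1 x : ℝ) : ℂ)) *
        Complex.exp (-(Complex.I * ((inner ℝ p.2 p.1 : ℝ) : ℂ)))) := by
    apply Continuous.mul
    · exact Complex.continuous_exp.comp
        (continuous_const.mul (Complex.continuous_ofReal.comp
          (Continuous.inner continuous_fst continuous_const)))
    · exact Complex.continuous_exp.comp
        (Continuous.neg (continuous_const.mul (Complex.continuous_ofReal.comp
          (Continuous.inner continuous_snd continuous_fst))))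
  have hFint : Integrable (Function.uncurry F) (volume.prod volume) := by
    have hbase : Integrable
        (fun p : EuclideanSpace ℝ (Fin d) × EuclideanSpace ℝ (Fin d) =>
          (φ (p.1 - c) : ℂ) * g p.2) (volume.prod volume) := hφc.mul_prod hg
    have hmul : Integrable (fun p : EuclideanSpace ℝ (Fin d) × EuclideanSpace ℝ (Fin d) =>
        (Complex.exp (Complex.I * ((inner ℝ p.1 x : ℝ) : ℂ)) *
          Complex.exp (-(Complex.I * ((inner ℝ p.2 p.1 : ℝ) : ℂ)))) *
          ((φ (p.1 - c) : ℂ) * g p.2)) (volume.prod volume) := by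
      apply hbase.bdd_mul (c := 1) hu.aestronglyMeasurable
      refine Eventually.of_forall fun p => ?_
      rw [norm_mul]
      rw [Complex.norm_exp, Complex.norm_exp]
      simp [Complex.mul_re]
    apply hmul.congr
    refine Eventually.of_forall fun p => ?_
    simp only [Function.uncurry, hF]
    ring
  calc (∫ ξ : EuclideanSpace ℝ (Fin d), Complex.exp (Complex.I * ((inner ℝ ξ x : ℝ) : ℂ)) *
        (φ (ξ - c) * ∫ y : EuclideanSpace ℝ (Fin d),
          Complex.exp (-(Complex.I * ((inner ℝ y ξ : ℝ) : ℂ))) * g y))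
      = ∫ ξ : EuclideanSpace ℝ (Fin d), ∫ y : EuclideanSpace ℝ (Fin d), F ξ y := by
        congr 1; ext ξ
        rw [← integral_const_mul, ← integral_const_mul]
        congr 1; ext y
        simp only [hF]; ring
    _ = ∫ y : EuclideanSpace ℝ (Fin d), ∫ ξ : EuclideanSpace ℝ (Fin d), F ξ y :=
        integral_integral_swap hFint
    _ = ∫ y : EuclideanSpace ℝ (Fin d),
          (∫ ξ : EuclideanSpace ℝ (Fin d),
            Complex.exp (Complex.I * ((inner ℝ ξ (x - y) : ℝ) : ℂ)) * φ (ξ - c)) * g y := by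
        congr 1; ext y
        rw [← integral_mul_const]
        congr 1; ext ξ
        have he : Complex.exp (Complex.I * ((inner ℝ ξ x : ℝ) : ℂ)) *
            Complex.exp (-(Complex.I * ((inner ℝ y ξ : ℝ) : ℂ)))
            = Complex.exp (Complex.I * ((inner ℝ ξ (x - y) : ℝ) : ℂ)) := by
          rw [← Complex.exp_add]
          congr 1
          rw [inner_sub_right, real_inner_comm y ξ]
          push_cast
          ring
        simp only [hF]
        rw [mul_mul_mul_comm, he, ← mul_assoc]

lemma aux_3bracket (L m : ℕ) {s t u v : ℝ} (hs : 0 ≤ s) (ht : 0 ≤ t) (hu : 0 ≤ u)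
    (hv : 0 ≤ v) (hsum : v ≤ s + t + u) :
    (1+s) ^ (-((L+m : ℕ) : ℝ)) * ((1+t) ^ (-(L:ℝ)) * (1+u) ^ (-((L+m : ℕ) : ℝ)))
      ≤ (1+v) ^ (-(L:ℝ)) * ((1+s) ^ (-(m:ℝ)) * (1+u) ^ (-(m:ℝ))) := by
  have hS : (0:ℝ) < 1 + s := by linarith
  have hT : (0:ℝ) < 1 + t := by linarith
  have hU : (0:ℝ) < 1 + u := by linarith
  have hsplit : ∀ {x : ℝ}, 0 < x → x ^ (-((L+m : ℕ) : ℝ)) = x ^ (-(L:ℝ)) * x ^ (-(m:ℝ)) := by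
    intro x hx
    rw [← Real.rpow_add hx]
    congr 1
    push_cast
    ring
  have h1 : 1 + v ≤ (1+s) * ((1+t) * (1+u)) := by
    nlinarith [mul_nonneg hs ht, mul_nonneg hs hu, mul_nonneg ht hu,
      mul_nonneg (mul_nonneg hs ht) hu]
  have h2 : ((1+s) * ((1+t) * (1+u))) ^ (-(L:ℝ)) ≤ (1+v) ^ (-(L:ℝ)) :=
    Real.rpow_le_rpow_of_nonpos (by positivity) h1 (by simp)
  have h3 : ((1+s) * ((1+t) * (1+u))) ^ (-(L:ℝ))
      = (1+s) ^ (-(L:ℝ)) * ((1+t) ^ (-(L:ℝ)) * (1+u) ^ (-(L:ℝ))) := by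
    rw [Real.mul_rpow hS.le (by positivity), Real.mul_rpow hT.le hU.le]
  rw [hsplit hS, hsplit hU]
  calc (1+s) ^ (-(L:ℝ)) * (1+s) ^ (-(m:ℝ)) *
        ((1+t) ^ (-(L:ℝ)) * ((1+u) ^ (-(L:ℝ)) * (1+u) ^ (-(m:ℝ))))
      = ((1+s) ^ (-(L:ℝ)) * ((1+t) ^ (-(L:ℝ)) * (1+u) ^ (-(L:ℝ)))) *
          ((1+s) ^ (-(m:ℝ)) * (1+u) ^ (-(m:ℝ))) := by ring
    _ ≤ (1+v) ^ (-(L:ℝ)) * ((1+s) ^ (-(m:ℝ)) * (1+u) ^ (-(m:ℝ))) := by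
        apply mul_le_mul_of_nonneg_right _ (by positivity)
        rw [← h3]; exact h2

end SHelp


/-- mismatch estimate for physical-space cutoffs. -/
theorem statement1 {d : ℕ} (hd : 1 ≤ d) (p q : ℝ≥0∞) (hp : 1 ≤ p) (hq : 1 ≤ q)
    (φ h : SchwartzMap (Rd d) ℂ) (L : ℕ) :
    ∃ C : ℝ, 0 < C ∧
      ∀ f : Rd d → ℂ, MeasureTheory.MemLp f p volume → ∀ k l l' : Fin d → ℤ,
        eLpNorm (fun x => h (x - KG.zvec l) *
            KG.FTinv (fun ξ => φ (ξ - KG.zvec k) *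
              KG.FT (fun y => h (y - KG.zvec l') * f y) ξ) x) q volume
          ≤ ENNReal.ofReal (C * KG.jb (KG.zvec l - KG.zvec l') ^ (-(L : ℝ))) *
              eLpNorm f p volume := by
  classical
  obtain ⟨Ch, hCh, hh⟩ := SHelp.aux_decay h (L + (d + 1))
  obtain ⟨Cφ, hCφ, hphi⟩ := SHelp.aux_phi φ L
  set m : ℕ := d + 1 with hmdef
  set w : Rd d → ℝ := fun x => (1 + ‖x‖) ^ (-(m : ℝ)) with hwdef
  have hwcont : Continuous w := SHelp.aux_w_cont m
  have hwpos : ∀ z : Rd d, 0 < w z := by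
    intro z; rw [hwdef]; positivity
  set pc : ℝ≥0∞ := (1 - p⁻¹)⁻¹ with hpcdef
  have hpinv : p⁻¹ ≤ 1 := ENNReal.inv_le_one.mpr hp
  have hpc1 : 1 ≤ pc := by
    rw [hpcdef]
    calc (1:ℝ≥0∞) = 1⁻¹ := by simp
      _ ≤ (1 - p⁻¹)⁻¹ := ENNReal.inv_le_inv' tsub_le_self
  have hpqr : (1:ℝ≥0∞)/1 = 1/pc + 1/p := by
    rw [hpcdef, one_div, one_div, one_div, inv_inv, inv_one]
    exact (tsub_add_cancel_of_le hpinv).symm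
  have hWpc := SHelp.aux_w_mem (d := d) m (by omega) pc hpc1
  have hWq := SHelp.aux_w_mem (d := d) m (by omega) q hq
  set ν : ℝ := ((2 * Real.pi)⁻¹) ^ d with hνdef
  have hν0 : 0 < ν := by rw [hνdef]; positivity
  set C0 : ℝ := ν * Ch * Ch * Cφ * (eLpNorm w pc volume).toReal
      * (eLpNorm w q volume).toReal with hC0
  have hC0nonneg : 0 ≤ C0 := by
    rw [hC0]
    have := ENNReal.toReal_nonneg (a := eLpNorm w pc volume)
    have := ENNReal.toReal_nonneg (a := eLpNorm w q volume)
    positivity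
  refine ⟨C0 + 1, by positivity, ?_⟩
  intro f hf k l l'
  set a := KG.zvec l with ha
  set b := KG.zvec l' with hb
  set c := KG.zvec k with hc
  set g : Rd d → ℂ := fun y => h (y - b) * f y with hgdef
  have hg_mem : MemLp g 1 volume := by
    haveI : ENNReal.HolderTriple pc p 1 := ⟨by simpa [one_div] using hpqr.symm⟩
    have hsm := MemLp.smul (p := pc) (q := p) (r := 1) hf
      (SHelp.aux_memLp_translate h pc hpc1 b)
    have hgs : ((fun y => (h (y - b) : ℂ)) • f) = g := by
      funext y; simp [hgdef, Pi.smul_apply, smul_eq_mul]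
    rwa [hgs] at hsm
  have hg_int : Integrable g volume := memLp_one_iff_integrable.mp hg_mem
  set Φf : Rd d → ℂ := fun z => ∫ ξ : Rd d,
      Complex.exp (Complex.I * ((inner ℝ ξ z : ℝ) : ℂ)) * φ (ξ - c) with hΦdef
  have hΦbound : ∀ z, ‖Φf z‖ ≤ Cφ * (1 + ‖z‖) ^ (-(L:ℝ)) := by
    intro z; rw [hΦdef]; exact hphi c z
  set J : ℝ≥0∞ := ∫⁻ y, ENNReal.ofReal (w (y - b) * ‖f y‖) with hJdef
  have hJ_le : J ≤ eLpNorm w pc volume * eLpNorm f p volume := by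
    have hJeq : J = eLpNorm ((fun y => w (y - b)) • f) 1 volume := by
      rw [hJdef, eLpNorm_one_eq_lintegral_enorm]
      congr 1; funext y
      rw [Pi.smul_apply', ← ofReal_norm, norm_smul, Real.norm_eq_abs,
        _root_.abs_of_pos (hwpos _)]
    rw [hJeq, ← SHelp.aux_eLpNorm_translate w hwcont pc b]
    haveI : ENNReal.HolderTriple pc p 1 := ⟨by simpa [one_div] using hpqr.symm⟩
    exact eLpNorm_smul_le_mul_eLpNorm hf.1
      ((hwcont.comp (continuous_id.sub continuous_const)).aestronglyMeasurable)
  have hJ_fin : J < ∞ := lt_of_le_of_lt hJ_le (ENNReal.mul_lt_top hWpc hf.2)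
  set K : ℝ := Ch * Ch * Cφ * (1 + ‖a - b‖) ^ (-(L:ℝ)) with hKdef
  have hKnonneg : 0 ≤ K := by
    rw [hKdef]; positivity
  set B : ℝ := ν * K * J.toReal with hBdef
  have hBnonneg : 0 ≤ B := by
    rw [hBdef]
    have := ENNReal.toReal_nonneg (a := J)
    positivity
  have key : ∀ x, ‖(h (x - a) : ℂ) *
      KG.FTinv (fun ξ => φ (ξ - c) * KG.FT g ξ) x‖ ≤ B * w (x - a) := by
    intro x
    have hT : (h (x - a) : ℂ) * KG.FTinv (fun ξ => φ (ξ - c) * KG.FT g ξ) x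
        = h (x - a) * (((2 * Real.pi : ℂ))⁻¹ ^ d * ∫ y, Φf (x - y) * g y) := by
      simp only [KG.FTinv, KG.FT, hΦdef]
      congr 2
      exact SHelp.aux_kernel φ g hg_int c x
    rw [hT, norm_mul, norm_mul]
    have hνeq : ‖((2 * Real.pi : ℂ))⁻¹ ^ d‖ = ν := by
      rw [norm_pow, norm_inv, hνdef]
      congr 2
      have h2 : ((2 * Real.pi : ℂ)) = ((2 * Real.pi : ℝ) : ℂ) := by push_cast; ring
      rw [h2, Complex.norm_real, Real.norm_eq_abs, _root_.abs_of_pos (by positivity)]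
    rw [hνeq]
    set X : ℝ≥0∞ := ∫⁻ y, ENNReal.ofReal ‖Φf (x - y) * g y‖ with hXdef
    have hXle : ‖∫ y, Φf (x - y) * g y‖ ≤ X.toReal := by
      rw [hXdef]; exact norm_integral_le_lintegral_norm _
    have hcomb : ENNReal.ofReal ‖(h (x - a) : ℂ)‖ * X
        ≤ ENNReal.ofReal (K * w (x - a)) * J := by
      rw [hXdef, hJdef, ← lintegral_const_mul' _ _ ENNReal.ofReal_ne_top,
        ← lintegral_const_mul' _ _ ENNReal.ofReal_ne_top]
      apply lintegral_mono
      intro y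
      beta_reduce
      rw [← ENNReal.ofReal_mul (norm_nonneg _),
        ← ENNReal.ofReal_mul (mul_nonneg hKnonneg (hwpos _).le)]
      apply ENNReal.ofReal_le_ofReal
      have hnorm3 : ‖Φf (x - y) * g y‖ = ‖Φf (x - y)‖ * (‖(h (y - b) : ℂ)‖ * ‖f y‖) := by
        simp only [hgdef, norm_mul, mul_assoc]
      rw [hnorm3]
      have hsum : ‖a - b‖ ≤ ‖x - a‖ + ‖x - y‖ + ‖y - b‖ := by
        have habc : a - b = -(x - a) + (x - y) + (y - b) := by abel
        rw [habc]
        refine le_trans (norm_add_le _ _) ?_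
        have h4 := norm_add_le (-(x - a)) (x - y)
        rw [norm_neg] at h4
        linarith
      have hbr := SHelp.aux_3bracket L m (norm_nonneg (x - a)) (norm_nonneg (x - y))
        (norm_nonneg (y - b)) (norm_nonneg (a - b)) hsum
      have hhx := hh (x - a)
      have hhy := hh (y - b)
      have hpz := hΦbound (x - y)
      calc ‖(h (x - a) : ℂ)‖ * (‖Φf (x - y)‖ * (‖(h (y - b) : ℂ)‖ * ‖f y‖))
          = (‖(h (x - a) : ℂ)‖ * (‖Φf (x - y)‖ * ‖(h (y - b) : ℂ)‖)) * ‖f y‖ := by ring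
        _ ≤ ((Ch * (1 + ‖x - a‖) ^ (-((L + m : ℕ) : ℝ))) *
              ((Cφ * (1 + ‖x - y‖) ^ (-(L:ℝ))) *
                (Ch * (1 + ‖y - b‖) ^ (-((L + m : ℕ) : ℝ))))) * ‖f y‖ := by
            apply mul_le_mul_of_nonneg_right _ (norm_nonneg _)
            apply mul_le_mul hhx _ (by positivity) (by positivity)
            apply mul_le_mul hpz hhy (norm_nonneg _) (by positivity)
        _ = (Ch * Ch * Cφ) * ((1 + ‖x - a‖) ^ (-((L + m : ℕ) : ℝ)) *
              ((1 + ‖x - y‖) ^ (-(L:ℝ)) * (1 + ‖y - b‖) ^ (-((L + m : ℕ) : ℝ)))) * ‖f y‖ := by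
            ring
        _ ≤ (Ch * Ch * Cφ) * ((1 + ‖a - b‖) ^ (-(L:ℝ)) *
              ((1 + ‖x - a‖) ^ (-(m:ℝ)) * (1 + ‖y - b‖) ^ (-(m:ℝ)))) * ‖f y‖ := by
            apply mul_le_mul_of_nonneg_right
              (mul_le_mul_of_nonneg_left hbr (by positivity)) (norm_nonneg _)
        _ = K * w (x - a) * (w (y - b) * ‖f y‖) := by
            simp only [hKdef, hwdef]; ring
    calc ‖(h (x - a) : ℂ)‖ * (ν * ‖∫ y, Φf (x - y) * g y‖)
        ≤ ‖(h (x - a) : ℂ)‖ * (ν * X.toReal) := by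
          apply mul_le_mul_of_nonneg_left
            (mul_le_mul_of_nonneg_left hXle hν0.le) (norm_nonneg _)
      _ = ν * (ENNReal.ofReal ‖(h (x - a) : ℂ)‖ * X).toReal := by
          rw [ENNReal.toReal_mul, ENNReal.toReal_ofReal (norm_nonneg _)]; ring
      _ ≤ ν * (ENNReal.ofReal (K * w (x - a)) * J).toReal := by
          apply mul_le_mul_of_nonneg_left _ hν0.le
          apply ENNReal.toReal_mono _ hcomb
          exact (ENNReal.mul_lt_top ENNReal.ofReal_lt_top hJ_fin).ne
      _ = (ν * K * J.toReal) * w (x - a) := by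
          rw [ENNReal.toReal_mul,
            ENNReal.toReal_ofReal (mul_nonneg hKnonneg (hwpos _).le)]
          ring
      _ = B * w (x - a) := by rw [hBdef]
  refine le_trans (eLpNorm_mono_real key) ?_
  have heq : (fun x : Rd d => B * w (x - a)) = B • (fun x : Rd d => w (x - a)) := by
    funext x; simp
  rw [heq, eLpNorm_const_smul, SHelp.aux_eLpNorm_translate w hwcont q a]
  have hjb_pos : 0 < KG.jb (a - b) := by
    rw [KG.jb]
    apply Real.sqrt_pos.mpr
    positivity
  have hjb_le : KG.jb (a - b) ≤ 1 + ‖a - b‖ := by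
    rw [KG.jb]
    have h1 : (1:ℝ) + ‖a - b‖ ^ 2 ≤ (1 + ‖a - b‖) ^ 2 := by nlinarith [norm_nonneg (a - b)]
    calc Real.sqrt (1 + ‖a - b‖ ^ 2) ≤ Real.sqrt ((1 + ‖a - b‖) ^ 2) := Real.sqrt_le_sqrt h1
      _ = 1 + ‖a - b‖ := Real.sqrt_sq (by positivity)
  have hmono : (1 + ‖a - b‖) ^ (-(L:ℝ)) ≤ KG.jb (a - b) ^ (-(L:ℝ)) :=
    Real.rpow_le_rpow_of_nonpos hjb_pos hjb_le (by simp)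
  calc ‖B‖ₑ * eLpNorm w q volume
      = ENNReal.ofReal B * eLpNorm w q volume := by rw [Real.enorm_eq_ofReal hBnonneg]
    _ = ENNReal.ofReal (ν * K) * (ENNReal.ofReal J.toReal * eLpNorm w q volume) := by
        rw [hBdef, ENNReal.ofReal_mul (mul_nonneg hν0.le hKnonneg), mul_assoc]
    _ = ENNReal.ofReal (ν * K) * (J * eLpNorm w q volume) := by
        rw [ENNReal.ofReal_toReal hJ_fin.ne]
    _ ≤ ENNReal.ofReal (ν * K) *
          ((eLpNorm w pc volume * eLpNorm f p volume) * eLpNorm w q volume) :=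
        mul_le_mul_right (mul_le_mul_left hJ_le _) _
    _ = (ENNReal.ofReal (ν * K) * eLpNorm w pc volume * eLpNorm w q volume)
          * eLpNorm f p volume := by ring
    _ ≤ ENNReal.ofReal ((C0 + 1) * KG.jb (a - b) ^ (-(L:ℝ))) * eLpNorm f p volume := by
        apply mul_le_mul_left
        rw [← ENNReal.ofReal_toReal hWpc.ne, ← ENNReal.ofReal_toReal hWq.ne,
          ← ENNReal.ofReal_mul (mul_nonneg hν0.le hKnonneg),
          ← ENNReal.ofReal_mul (by positivity)]
        apply ENNReal.ofReal_le_ofReal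
        have hWpc0 := ENNReal.toReal_nonneg (a := eLpNorm w pc volume)
        have hWq0 := ENNReal.toReal_nonneg (a := eLpNorm w q volume)
        calc ν * K * (eLpNorm w pc volume).toReal * (eLpNorm w q volume).toReal
            = C0 * (1 + ‖a - b‖) ^ (-(L:ℝ)) := by
              rw [hKdef, hC0]; ring
          _ ≤ (C0 + 1) * KG.jb (a - b) ^ (-(L:ℝ)) := by
              apply mul_le_mul (by linarith) hmono (by positivity) (by linarith)
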